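/- Let f : ℝ → ℝ be continuous and satisfy the exponential decay estimates with constants C₁, C₂, α, β > 0, and let n be a natural number. Then for every ω ∈ ℂ with −α < Im ω < β, the n-th complex derivative of F(f) exists at ω and F(t^n·f(t))(ω) = (−i)^n·(d^n/dω^n)F(f)(ω), where F(t^n·f(t))(ω) = ∫_{−∞}^{∞} t^n·exp(i·ω·t)·f(t) dt. -/

import Mathlib

/-!
On the strip `-α < Im z < β` the decay of `f` beats the growth `exp (-Im z * t)` of the kernel
`exp (i z t)`, with an exponential margin that is locally uniform in `z`; the margin also absorbs
any polynomial factor `tᵏ`. Hence differentiation under the integral sign is justified at every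
order: the `k`-th derivative of the transform is `∫ (i t)ᵏ exp (i z t) f t dt`, and the transform is
holomorphic, hence smooth, on the strip. Multiplying by `(-i)ⁿ` turns `(i t)ⁿ` into `tⁿ`.
-/

open MeasureTheory Real Set Filter Topology

lemma integrable_exp_neg_mul_abs {b : ℝ} (hb : 0 < b) :
    Integrable fun t : ℝ => exp (-b * |t|) := by
  have hIoi : IntegrableOn (fun t : ℝ => exp (-b * |t|)) (Ioi 0) :=
    (exp_neg_integrableOn_Ioi 0 hb).congr_fun (fun t ht => by rw [abs_of_pos ht])
      measurableSet_Ioi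
  rw [← integrableOn_univ, ← Iio_union_Ici (a := 0), integrableOn_union,
    integrableOn_Ici_iff_integrableOn_Ioi]
  refine ⟨?_, hIoi⟩
  rw [← (Measure.measurePreserving_neg (volume : Measure ℝ)).integrableOn_comp_preimage
      (Homeomorph.neg ℝ).measurableEmbedding]
  simpa only [Function.comp_def, abs_neg, neg_preimage, neg_Iio, neg_zero] using hIoi

lemma integrable_pow_abs_mul_exp_neg_mul_abs (k : ℕ) {b : ℝ} (hb : 0 < b) :
    Integrable fun t : ℝ => |t| ^ k * exp (-b * |t|) := by
  refine ((integrable_exp_neg_mul_abs (half_pos hb)).const_mul ((k / (b / 2)) ^ k)).mono'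
    (by fun_prop) (ae_of_all _ fun t => ?_)
  have hpow : |t| ^ k ≤ (k / (b / 2)) ^ k * exp (b / 2 * |t|) := by
    simpa [abs_of_pos (half_pos hb)] using
      ProbabilityTheory.rpow_abs_le_mul_exp_abs t k.cast_nonneg (half_pos hb).ne'
  rw [norm_of_nonneg (by positivity)]
  calc |t| ^ k * exp (-b * |t|)
      ≤ (k / (b / 2)) ^ k * exp (b / 2 * |t|) * exp (-b * |t|) := by gcongr
    _ = (k / (b / 2)) ^ k * exp (-(b / 2) * |t|) := by
      rw [mul_assoc, ← exp_add]; ring_nf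

lemma Complex.norm_exp_I_mul_mul_ofReal (z : ℂ) (t : ℝ) :
    ‖Complex.exp (Complex.I * z * t)‖ = Real.exp (-z.im * t) := by
  simp [Complex.norm_exp, Complex.mul_re]

noncomputable def fourierMoment (g : ℝ → ℂ) (k : ℕ) (z : ℂ) : ℂ :=
  ∫ t : ℝ, (Complex.I * t) ^ k * Complex.exp (Complex.I * z * t) * g t

section decay

variable {g : ℝ → ℂ} {C₁ C₂ α β : ℝ}

lemma exp_mul_norm_le_of_decay (h₁ : ∀ t, 0 ≤ t → ‖g t‖ ≤ C₁ * exp (-α * t))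
    (h₂ : ∀ t, t ≤ 0 → ‖g t‖ ≤ C₂ * exp (β * t)) {c δ : ℝ} (hα : δ ≤ α + c)
    (hβ : δ ≤ β - c) (t : ℝ) :
    exp (-c * t) * ‖g t‖ ≤ (C₁ + C₂) * exp (-δ * |t|) := by
  have hC₁ : 0 ≤ C₁ := by simpa using (norm_nonneg _).trans (h₁ 0 le_rfl)
  have hC₂ : 0 ≤ C₂ := by simpa using (norm_nonneg _).trans (h₂ 0 le_rfl)
  rcases le_total 0 t with ht | ht
  · calc exp (-c * t) * ‖g t‖ ≤ exp (-c * t) * (C₁ * exp (-α * t)) := by gcongr; exact h₁ t ht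
      _ = C₁ * exp (-(α + c) * t) := by rw [mul_left_comm, ← exp_add]; ring_nf
      _ ≤ (C₁ + C₂) * exp (-δ * |t|) := by
        rw [abs_of_nonneg ht]
        gcongr ?_ * exp ?_
        · linarith
        · nlinarith
  · calc exp (-c * t) * ‖g t‖ ≤ exp (-c * t) * (C₂ * exp (β * t)) := by gcongr; exact h₂ t ht
      _ = C₂ * exp ((β - c) * t) := by rw [mul_left_comm, ← exp_add]; ring_nf
      _ ≤ (C₁ + C₂) * exp (-δ * |t|) := by
        rw [abs_of_nonpos ht]
        gcongr ?_ * exp ?_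
        · linarith
        · nlinarith

lemma norm_fourierMoment_integrand_le (h₁ : ∀ t, 0 ≤ t → ‖g t‖ ≤ C₁ * exp (-α * t))
    (h₂ : ∀ t, t ≤ 0 → ‖g t‖ ≤ C₂ * exp (β * t)) (k : ℕ) {z : ℂ} {δ : ℝ}
    (hα : δ ≤ α + z.im) (hβ : δ ≤ β - z.im) (t : ℝ) :
    ‖(Complex.I * t) ^ k * Complex.exp (Complex.I * z * t) * g t‖ ≤
      (C₁ + C₂) * (|t| ^ k * exp (-δ * |t|)) := by
  rw [norm_mul, norm_mul, norm_pow, norm_mul, Complex.norm_I, Complex.norm_real, one_mul,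
    Complex.norm_exp_I_mul_mul_ofReal, norm_eq_abs, mul_assoc]
  calc |t| ^ k * (exp (-z.im * t) * ‖g t‖) ≤ |t| ^ k * ((C₁ + C₂) * exp (-δ * |t|)) := by
        gcongr ?_ * ?_; exact exp_mul_norm_le_of_decay h₁ h₂ hα hβ t
    _ = (C₁ + C₂) * (|t| ^ k * exp (-δ * |t|)) := by ring

lemma integrable_fourierMoment_integrand (hg : AEStronglyMeasurable g)
    (h₁ : ∀ t, 0 ≤ t → ‖g t‖ ≤ C₁ * exp (-α * t))
    (h₂ : ∀ t, t ≤ 0 → ‖g t‖ ≤ C₂ * exp (β * t)) (k : ℕ) {z : ℂ} {δ : ℝ} (hδ : 0 < δ)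
    (hα : δ ≤ α + z.im) (hβ : δ ≤ β - z.im) :
    Integrable fun t : ℝ => (Complex.I * t) ^ k * Complex.exp (Complex.I * z * t) * g t :=
  ((integrable_pow_abs_mul_exp_neg_mul_abs k hδ).const_mul _).mono'
    ((by fun_prop : Continuous _).aestronglyMeasurable.mul hg)
    (ae_of_all _ (norm_fourierMoment_integrand_le h₁ h₂ k hα hβ))

lemma hasDerivAt_fourierMoment (hg : AEStronglyMeasurable g)
    (h₁ : ∀ t, 0 ≤ t → ‖g t‖ ≤ C₁ * exp (-α * t))
    (h₂ : ∀ t, t ≤ 0 → ‖g t‖ ≤ C₂ * exp (β * t)) (k : ℕ) {z : ℂ} (hz : z.im ∈ Ioo (-α) β) :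
    HasDerivAt (fourierMoment g k) (fourierMoment g (k + 1) z) z := by
  set δ := min (α + z.im) (β - z.im)
  have hδ : 0 < δ := lt_min (by linarith [hz.1]) (by linarith [hz.2])
  have hball : ∀ w ∈ Metric.ball z (δ / 2), δ / 2 ≤ α + w.im ∧ δ / 2 ≤ β - w.im := by
    intro w hw
    have him := abs_le.mp ((Complex.abs_im_le_norm (w - z)).trans
      (mem_ball_iff_norm.mp hw).le)
    rw [Complex.sub_im] at him
    exact ⟨by linarith [min_le_left (α + z.im) (β - z.im)],
      by linarith [min_le_right (α + z.im) (β - z.im)]⟩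
  have hderiv (t : ℝ) (w : ℂ) : HasDerivAt
      (fun w => (Complex.I * t) ^ k * Complex.exp (Complex.I * w * t) * g t)
      ((Complex.I * t) ^ (k + 1) * Complex.exp (Complex.I * w * t) * g t) w := by
    have hlin : HasDerivAt (fun w : ℂ => Complex.I * w * t) (Complex.I * t) w := by
      simpa using ((hasDerivAt_id w).const_mul Complex.I).mul_const (t : ℂ)
    exact ((hlin.cexp.const_mul ((Complex.I * t) ^ k)).mul_const (g t)).congr_deriv (by ring)
  exact (hasDerivAt_integral_of_dominated_loc_of_deriv_le
    (F := fun w (t : ℝ) => (Complex.I * t) ^ k * Complex.exp (Complex.I * w * t) * g t)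
    (F' := fun w (t : ℝ) => (Complex.I * t) ^ (k + 1) * Complex.exp (Complex.I * w * t) * g t)
    (Metric.ball_mem_nhds z (half_pos hδ))
    (Eventually.of_forall fun _ => (by fun_prop : Continuous _).aestronglyMeasurable.mul hg)
    (integrable_fourierMoment_integrand hg h₁ h₂ k hδ (min_le_left _ _) (min_le_right _ _))
    ((by fun_prop : Continuous _).aestronglyMeasurable.mul hg)
    (ae_of_all _ fun t w hw => norm_fourierMoment_integrand_le h₁ h₂ (k + 1)
      (hball w hw).1 (hball w hw).2 t)
    ((integrable_pow_abs_mul_exp_neg_mul_abs (k + 1) (half_pos hδ)).const_mul _)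
    (ae_of_all _ fun t w _ => hderiv t w)).2

lemma iteratedDeriv_fourierMoment (hg : AEStronglyMeasurable g)
    (h₁ : ∀ t, 0 ≤ t → ‖g t‖ ≤ C₁ * exp (-α * t))
    (h₂ : ∀ t, t ≤ 0 → ‖g t‖ ≤ C₂ * exp (β * t)) (k n : ℕ) {z : ℂ} (hz : z.im ∈ Ioo (-α) β) :
    iteratedDeriv n (fourierMoment g k) z = fourierMoment g (k + n) z := by
  induction n generalizing z with
  | zero => rw [iteratedDeriv_zero, add_zero]
  | succ n ih =>
    have hnhds : Complex.im ⁻¹' Ioo (-α) β ∈ 𝓝 z :=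
      (isOpen_Ioo.preimage Complex.continuous_im).mem_nhds hz
    rw [iteratedDeriv_succ, EventuallyEq.deriv_eq (eventually_of_mem hnhds fun _ hw => ih hw)]
    exact (hasDerivAt_fourierMoment hg h₁ h₂ (k + n) hz).deriv

lemma contDiffAt_fourierMoment (hg : AEStronglyMeasurable g)
    (h₁ : ∀ t, 0 ≤ t → ‖g t‖ ≤ C₁ * exp (-α * t))
    (h₂ : ∀ t, t ≤ 0 → ‖g t‖ ≤ C₂ * exp (β * t)) (k : ℕ) {z : ℂ} (hz : z.im ∈ Ioo (-α) β)
    {m : WithTop ℕ∞} : ContDiffAt ℂ m (fourierMoment g k) z :=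
  (DifferentiableOn.analyticAt
    (fun _ hw => (hasDerivAt_fourierMoment hg h₁ h₂ k hw).differentiableAt.differentiableWithinAt)
    ((isOpen_Ioo.preimage Complex.continuous_im).mem_nhds hz)).contDiffAt

end decay

theorem fourier_bicomplex_iterated_deriv_general
    (f : ℝ → ℝ) (C₁ C₂ α β : ℝ) (n : ℕ)
    (hf : Continuous f)
    (h₁ : ∀ t : ℝ, 0 ≤ t → |f t| ≤ C₁ * Real.exp (-α * t))
    (h₂ : ∀ t : ℝ, t ≤ 0 → |f t| ≤ C₂ * Real.exp (β * t))
    (ω : ℂ) (hω₁ : -α < ω.im) (hω₂ : ω.im < β) :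
    ContDiffAt ℂ n
        (fun z : ℂ => ∫ t : ℝ, Complex.exp (Complex.I * z * t) * (f t : ℂ)) ω ∧
      (∫ t : ℝ, (t : ℂ) ^ n * Complex.exp (Complex.I * ω * t) * (f t : ℂ)) =
        (-Complex.I) ^ n *
          iteratedDeriv n
            (fun z : ℂ => ∫ t : ℝ, Complex.exp (Complex.I * z * t) * (f t : ℂ)) ω := by
  have hg : AEStronglyMeasurable (fun t => (f t : ℂ)) := by fun_prop
  have hg₁ : ∀ t, 0 ≤ t → ‖(f t : ℂ)‖ ≤ C₁ * exp (-α * t) := by simpa using h₁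
  have hg₂ : ∀ t, t ≤ 0 → ‖(f t : ℂ)‖ ≤ C₂ * exp (β * t) := by simpa using h₂
  have hω : ω.im ∈ Ioo (-α) β := ⟨hω₁, hω₂⟩
  have hF : (fun z : ℂ => ∫ t : ℝ, Complex.exp (Complex.I * z * t) * (f t : ℂ)) =
      fourierMoment (fun t => (f t : ℂ)) 0 := by
    funext z
    simp only [fourierMoment, pow_zero, one_mul]
  rw [hF, iteratedDeriv_fourierMoment hg hg₁ hg₂ 0 n hω, zero_add, fourierMoment,
    ← integral_const_mul]
  refine ⟨contDiffAt_fourierMoment hg hg₁ hg₂ 0 hω, integral_congr_ae (ae_of_all _ fun t => ?_)⟩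
  have hI : (-Complex.I) ^ n * Complex.I ^ n = 1 := by
    rw [← mul_pow, neg_mul, Complex.I_mul_I, neg_neg, one_pow]
  dsimp only
  linear_combination (-(t : ℂ) ^ n * Complex.exp (Complex.I * ω * t) * f t) * hI

theorem fourier_bicomplex_iterated_deriv
    (f : ℝ → ℝ) (C₁ C₂ α β : ℝ) (n : ℕ)
    (hC₁ : 0 < C₁) (hC₂ : 0 < C₂) (hα : 0 < α) (hβ : 0 < β)
    (hf : Continuous f)
    (h₁ : ∀ t : ℝ, 0 ≤ t → |f t| ≤ C₁ * Real.exp (-α * t))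
    (h₂ : ∀ t : ℝ, t ≤ 0 → |f t| ≤ C₂ * Real.exp (β * t))
    (ω : ℂ) (hω₁ : -α < ω.im) (hω₂ : ω.im < β) :
    ContDiffAt ℂ n
        (fun z : ℂ => ∫ t : ℝ, Complex.exp (Complex.I * z * t) * (f t : ℂ)) ω ∧
      (∫ t : ℝ, (t : ℂ) ^ n * Complex.exp (Complex.I * ω * t) * (f t : ℂ)) =
        (-Complex.I) ^ n *
          iteratedDeriv n
            (fun z : ℂ => ∫ t : ℝ, Complex.exp (Complex.I * z * t) * (f t : ℂ)) ω :=
  fourier_bicomplex_iterated_deriv_general f C₁ C₂ α β n hf h₁ h₂ ω hω₁ hω₂
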